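/- arXiv:math/0604193 — 4 statements merged into one kernel-verified Lean document; each statement's English description precedes it below -/
import Mathlib

section
/- The only lines contained in the surface S = {x0*x3 - x1*x4 = x0*x1 + x1*x3 + x2^2 = 0} in P^4 are E5 = {x0 = x1 = x2 = 0} and E6 = {x1 = x2 = x3 = 0}, and these two lines intersect exactly in the point (0:0:0:0:1). -/
/-!
A line on `S` lies in the quadric cone `x₁(x₀ + x₃) + x₂² = 0`, whose base conic
`ab + c² = 0` contains no line; hence `x₂ y₁ = x₁ y₂` for any two points of the line.
If some point `x` of the line had `x₁ ≠ 0`, then for every other point `y` the vector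
`x₁ y - y₁ x` would have vanishing coordinates 1 and 2, and the two quadrics together
with their polarizations at `x` force it to vanish, so the line would be a single point.
Thus `x₁ = x₂ = 0` on the line, where `S` reduces to `x₀ x₃ = 0`, the union of `E5`
and `E6`.
-/

open Submodule Module

theorem finrank_span_pair_of_linearIndependent {K V : Type*} [DivisionRing K] [AddCommGroup V]
    [Module K V] {x y : V} (h : LinearIndependent K ![x, y]) :
    finrank K (span K {x, y}) = 2 := by
  rw [← Matrix.range_cons_cons_empty x y ![], finrank_span_eq_card h, Fintype.card_fin]

namespace LinesOnSurface

variable (k : Type*) [Field k]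

def surface : Set (Fin 5 → k) :=
  {x | x 0 * x 3 - x 1 * x 4 = 0 ∧ x 0 * x 1 + x 1 * x 3 + (x 2) ^ 2 = 0}

def lineE5 : Submodule k (Fin 5 → k) := span k {![0, 0, 0, 1, 0], ![0, 0, 0, 0, 1]}

def lineE6 : Submodule k (Fin 5 → k) := span k {![1, 0, 0, 0, 0], ![0, 0, 0, 0, 1]}

variable {k}

theorem mem_lineE5_iff {x : Fin 5 → k} : x ∈ lineE5 k ↔ x 0 = 0 ∧ x 1 = 0 ∧ x 2 = 0 := by
  refine ⟨fun hx => ?_, fun ⟨h0, h1, h2⟩ => mem_span_pair.mpr ⟨x 3, x 4, ?_⟩⟩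
  · obtain ⟨a, b, rfl⟩ := mem_span_pair.mp hx
    simp
  · funext i
    fin_cases i <;> simp [h0, h1, h2]

theorem mem_lineE6_iff {x : Fin 5 → k} : x ∈ lineE6 k ↔ x 1 = 0 ∧ x 2 = 0 ∧ x 3 = 0 := by
  refine ⟨fun hx => ?_, fun ⟨h1, h2, h3⟩ => mem_span_pair.mpr ⟨x 0, x 4, ?_⟩⟩
  · obtain ⟨a, b, rfl⟩ := mem_span_pair.mp hx
    simp
  · funext i
    fin_cases i <;> simp [h1, h2, h3]

variable (k)

theorem finrank_lineE5 : finrank k (lineE5 k) = 2 :=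
  finrank_span_pair_of_linearIndependent <| LinearIndependent.pair_iff.mpr fun s t h =>
    ⟨by simpa using congrFun h 3, by simpa using congrFun h 4⟩

theorem finrank_lineE6 : finrank k (lineE6 k) = 2 :=
  finrank_span_pair_of_linearIndependent <| LinearIndependent.pair_iff.mpr fun s t h =>
    ⟨by simpa using congrFun h 0, by simpa using congrFun h 4⟩

theorem lineE5_subset_surface : (lineE5 k : Set (Fin 5 → k)) ⊆ surface k := by
  intro x hx
  obtain ⟨h0, h1, h2⟩ := mem_lineE5_iff.mp hx
  simp [surface, h0, h1, h2]

theorem lineE6_subset_surface : (lineE6 k : Set (Fin 5 → k)) ⊆ surface k := by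
  intro x hx
  obtain ⟨h1, h2, h3⟩ := mem_lineE6_iff.mp hx
  simp [surface, h1, h2, h3]

theorem lineE5_inf_lineE6 : lineE5 k ⊓ lineE6 k = span k {![(0 : k), 0, 0, 0, 1]} := by
  ext x
  rw [mem_inf, mem_lineE5_iff, mem_lineE6_iff, mem_span_singleton]
  constructor
  · rintro ⟨⟨h0, h1, h2⟩, -, -, h3⟩
    refine ⟨x 4, ?_⟩
    funext i
    fin_cases i <;> simp [h0, h1, h2, h3]
  · rintro ⟨a, rfl⟩
    simp

variable {k} {W : Submodule k (Fin 5 → k)} (hW : (W : Set (Fin 5 → k)) ⊆ surface k)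
include hW

theorem polar_eq_zero {x y : Fin 5 → k} (hx : x ∈ W) (hy : y ∈ W) :
    x 0 * y 3 + x 3 * y 0 - x 1 * y 4 - x 4 * y 1 = 0 ∧
      x 0 * y 1 + x 1 * y 0 + x 1 * y 3 + x 3 * y 1 + 2 * (x 2 * y 2) = 0 := by
  obtain ⟨hx₁, hx₂⟩ := hW hx
  obtain ⟨hy₁, hy₂⟩ := hW hy
  obtain ⟨h₁, h₂⟩ := hW (W.add_mem hx hy)
  simp only [Pi.add_apply] at h₁ h₂
  exact ⟨by linear_combination h₁ - hx₁ - hy₁, by linear_combination h₂ - hx₂ - hy₂⟩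

theorem coord_two_mul_coord_one {x y : Fin 5 → k} (hx : x ∈ W) (hy : y ∈ W) :
    x 2 * y 1 = x 1 * y 2 := by
  have hsq : (x 2 * y 1 - x 1 * y 2) ^ 2 = 0 := by
    linear_combination y 1 ^ 2 * (hW hx).2 + x 1 ^ 2 * (hW hy).2
      - x 1 * y 1 * (polar_eq_zero hW hx hy).2
  exact sub_eq_zero.mp (pow_eq_zero_iff two_ne_zero |>.mp hsq)

theorem eq_zero_of_coord_one_eq_zero_of_coord_two_eq_zero {x z : Fin 5 → k} (hx : x ∈ W)
    (hx1 : x 1 ≠ 0) (hz : z ∈ W) (hz1 : z 1 = 0) (hz2 : z 2 = 0) : z = 0 := by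
  obtain ⟨hp₁, hp₂⟩ := polar_eq_zero hW hx hz
  have hs : z 0 + z 3 = 0 :=
    (mul_eq_zero.mp (by linear_combination hp₂ - (x 0 + x 3) * hz1 - 2 * x 2 * hz2 :
      x 1 * (z 0 + z 3) = 0)).resolve_left hx1
  have h0 : z 0 = 0 :=
    pow_eq_zero_iff two_ne_zero |>.mp
      (by linear_combination z 0 * hs - (hW hz).1 - z 4 * hz1 : z 0 ^ 2 = 0)
  have h3 : z 3 = 0 := by linear_combination hs - h0
  have h4 : z 4 = 0 :=
    (mul_eq_zero.mp (by linear_combination -hp₁ + x 0 * h3 + x 3 * h0 - x 4 * hz1 :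
      x 1 * z 4 = 0)).resolve_left hx1
  funext i
  fin_cases i <;> simp [h0, hz1, hz2, h3, h4]

theorem le_span_singleton_of_coord_one_ne_zero {x : Fin 5 → k} (hx : x ∈ W) (hx1 : x 1 ≠ 0) :
    W ≤ span k {x} := by
  intro y hy
  have hz : x 1 • y - y 1 • x = 0 :=
    eq_zero_of_coord_one_eq_zero_of_coord_two_eq_zero hW hx hx1
      (W.sub_mem (W.smul_mem _ hy) (W.smul_mem _ hx))
      (by simp only [Pi.sub_apply, Pi.smul_apply, smul_eq_mul]; ring)
      (by simp only [Pi.sub_apply, Pi.smul_apply, smul_eq_mul]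
          linear_combination -coord_two_mul_coord_one hW hx hy)
  refine mem_span_singleton.mpr ⟨(x 1)⁻¹ * y 1, ?_⟩
  rw [mul_smul, ← sub_eq_zero.mp hz, inv_smul_smul₀ hx1]

theorem coord_one_eq_zero (hrank : 1 < finrank k W) {x : Fin 5 → k} (hx : x ∈ W) : x 1 = 0 := by
  by_contra hx1
  have := (finrank_mono (le_span_singleton_of_coord_one_ne_zero hW hx hx1)).trans
    (finrank_span_le_card ({x} : Set (Fin 5 → k)))
  simp only [Set.toFinset_singleton, Finset.card_singleton] at this
  omega

theorem coord_two_eq_zero (hrank : 1 < finrank k W) {x : Fin 5 → k} (hx : x ∈ W) : x 2 = 0 :=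
  pow_eq_zero_iff two_ne_zero |>.mp <| by
    linear_combination (hW hx).2 - (x 0 + x 3) * coord_one_eq_zero hW hrank hx

theorem le_lineE5_or_le_lineE6 (hrank : 1 < finrank k W) : W ≤ lineE5 k ∨ W ≤ lineE6 k := by
  have h1 := fun x (hx : x ∈ W) => coord_one_eq_zero hW hrank hx
  have h2 := fun x (hx : x ∈ W) => coord_two_eq_zero hW hrank hx
  by_cases h0 : ∀ x ∈ W, x 0 = 0
  · exact .inl fun x hx => mem_lineE5_iff.mpr ⟨h0 x hx, h1 x hx, h2 x hx⟩
  obtain ⟨x, hx, hx0⟩ : ∃ x ∈ W, x 0 ≠ 0 := by simpa using h0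
  have hx3 : x 3 = 0 :=
    (mul_eq_zero.mp (by linear_combination (hW hx).1 + x 4 * h1 x hx :
      x 0 * x 3 = 0)).resolve_left hx0
  refine .inr fun y hy => mem_lineE6_iff.mpr ⟨h1 y hy, h2 y hy, ?_⟩
  exact (mul_eq_zero.mp (by
    linear_combination (polar_eq_zero hW hx hy).1 - y 0 * hx3 + y 4 * h1 x hx + x 4 * h1 y hy :
      x 0 * y 3 = 0)).resolve_left hx0

end LinesOnSurface

open LinesOnSurface

theorem stmt_1_general (k : Type*) [Field k] :
    let E5 : Submodule k (Fin 5 → k) :=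
      Submodule.span k {![0, 0, 0, 1, 0], ![0, 0, 0, 0, 1]}
    let E6 : Submodule k (Fin 5 → k) :=
      Submodule.span k {![1, 0, 0, 0, 0], ![0, 0, 0, 0, 1]}
    let inS : Set (Fin 5 → k) :=
      {x | x 0 * x 3 - x 1 * x 4 = 0 ∧ x 0 * x 1 + x 1 * x 3 + (x 2) ^ 2 = 0}
    (Module.finrank k E5 = 2 ∧ (E5 : Set (Fin 5 → k)) ⊆ inS) ∧
    (Module.finrank k E6 = 2 ∧ (E6 : Set (Fin 5 → k)) ⊆ inS) ∧
    (∀ W : Submodule k (Fin 5 → k), Module.finrank k W = 2 →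
      (W : Set (Fin 5 → k)) ⊆ inS → W = E5 ∨ W = E6) ∧
    E5 ⊓ E6 = Submodule.span k {![(0 : k), 0, 0, 0, 1]} := by
  intro E5 E6 inS
  refine ⟨⟨finrank_lineE5 k, lineE5_subset_surface k⟩,
    ⟨finrank_lineE6 k, lineE6_subset_surface k⟩, fun W hrank hW => ?_, lineE5_inf_lineE6 k⟩
  rcases le_lineE5_or_le_lineE6 hW (by omega) with h | h
  · exact .inl (eq_of_le_of_finrank_le h (by rw [hrank]; exact (finrank_lineE5 k).le))
  · exact .inr (eq_of_le_of_finrank_le h (by rw [hrank]; exact (finrank_lineE6 k).le))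

/-- The only lines on the quartic surface
`S = {x0*x3 - x1*x4 = x0*x1 + x1*x3 + x2^2 = 0} ⊂ ℙ⁴` over an algebraically
closed field are `E5 = {x0 = x1 = x2 = 0}` and `E6 = {x1 = x2 = x3 = 0}`,
and they intersect exactly in the point `(0:0:0:0:1)`.  Lines are
projectivizations of `2`-dimensional linear subspaces of `k⁵`. -/
theorem stmt_1 (k : Type*) [Field k] [IsAlgClosed k] :
    let E5 : Submodule k (Fin 5 → k) :=
      Submodule.span k {![0, 0, 0, 1, 0], ![0, 0, 0, 0, 1]}
    let E6 : Submodule k (Fin 5 → k) :=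
      Submodule.span k {![1, 0, 0, 0, 0], ![0, 0, 0, 0, 1]}
    let inS : Set (Fin 5 → k) :=
      {x | x 0 * x 3 - x 1 * x 4 = 0 ∧ x 0 * x 1 + x 1 * x 3 + (x 2) ^ 2 = 0}
    (Module.finrank k E5 = 2 ∧ (E5 : Set (Fin 5 → k)) ⊆ inS) ∧
    (Module.finrank k E6 = 2 ∧ (E6 : Set (Fin 5 → k)) ⊆ inS) ∧
    (∀ W : Submodule k (Fin 5 → k), Module.finrank k W = 2 →
      (W : Set (Fin 5 → k)) ⊆ inS → W = E5 ∨ W = E6) ∧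
    E5 ⊓ E6 = Submodule.span k {![(0 : k), 0, 0, 0, 1]} :=
  stmt_1_general k
end

section
/- The map psi sending (t:u:v) to (t*v^2 : v^3 : v^2*u : -v*(t*v+u^2) : -t*(t*v+u^2)) maps points of P^2 into S, and its restriction to the affine chart {v ≠ 0} is a bijection onto S° = {x ∈ S | x1 ≠ 0}, with inverse given by x ↦ (x0 : x2 : x1). -/
/-!
Composing `ψ` with the projection `x ↦ (x0 : x2 : x1)` multiplies `(t, u, v)` by `v²`, so this
projection is a left inverse of `ψ` on `{v ≠ 0}`, which gives injectivity. Conversely, the two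
equations of `S` say exactly that `ψ(x0, x2, x1) = x1² • x`, which gives surjectivity onto `S°`.
-/

namespace QuadricIntersection

def psi {R : Type*} [CommRing R] (t u v : R) : Fin 5 → R :=
  ![t * v ^ 2, v ^ 3, v ^ 2 * u, -(v * (t * v + u ^ 2)), -(t * (t * v + u ^ 2))]

def IsOnS {R : Type*} [CommRing R] (x : Fin 5 → R) : Prop :=
  x 0 * x 3 - x 1 * x 4 = 0 ∧ x 0 * x 1 + x 1 * x 3 + x 2 ^ 2 = 0

def proj {R : Type*} (x : Fin 5 → R) : R × R × R := (x 0, x 2, x 1)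

theorem proj_smul {R : Type*} [Mul R] (c : R) (x : Fin 5 → R) : proj (c • x) = c • proj x := rfl

section CommRing

variable {R : Type*} [CommRing R]

theorem isOnS_psi (t u v : R) : IsOnS (psi t u v) := by
  constructor <;> simp [psi] <;> ring

theorem proj_psi (t u v : R) : proj (psi t u v) = v ^ 2 • (t, u, v) := by
  simp only [proj, psi, Prod.smul_mk, smul_eq_mul, Prod.mk.injEq]
  refine ⟨?_, ?_, ?_⟩ <;> simp <;> ring

theorem psi_eq_smul_of_isOnS {x : Fin 5 → R} (hx : IsOnS x) :
    psi (x 0) (x 2) (x 1) = x 1 ^ 2 • x := by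
  obtain ⟨h₁, h₂⟩ := hx
  funext i
  fin_cases i <;> simp [psi]
  · ring
  · ring
  · linear_combination (-x 1) * h₂
  · linear_combination (-x 0) * h₂ + x 1 * h₁

end CommRing

theorem eq_smul_of_psi_eq_smul_psi {k : Type*} [Field k] {t u v t' u' v' c : k}
    (hv : v ≠ 0) (h : psi t u v = c • psi t' u' v') :
    (t, u, v) = (c * v' ^ 2 / v ^ 2) • (t', u', v') := by
  have hproj : v ^ 2 • (t, u, v) = (c * v' ^ 2) • (t', u', v') := by
    rw [← proj_psi, h, proj_smul, proj_psi, smul_smul]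
  rw [div_eq_inv_mul, mul_smul, ← hproj, inv_smul_smul₀ (pow_ne_zero 2 hv)]

end QuadricIntersection

open QuadricIntersection in
/-- The map `ψ : (t:u:v) ↦ (tv² : v³ : v²u : -v(tv+u²) : -t(tv+u²))` maps `ℙ²`
into `S`, and restricts to a bijection (of projective points, i.e. up to a
nonzero scalar) between the affine chart `{v ≠ 0}` and
`S° = {x ∈ S | x1 ≠ 0}`, with inverse `x ↦ (x0 : x2 : x1)`. -/
theorem stmt_2 (k : Type*) [Field k] :
    let ψ : k → k → k → (Fin 5 → k) := fun t u v =>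
      ![t * v ^ 2, v ^ 3, v ^ 2 * u, -(v * (t * v + u ^ 2)),
        -(t * (t * v + u ^ 2))]
    let inS : (Fin 5 → k) → Prop := fun x =>
      x 0 * x 3 - x 1 * x 4 = 0 ∧ x 0 * x 1 + x 1 * x 3 + (x 2) ^ 2 = 0
    -- ψ maps points of ℙ² into S
    (∀ t u v : k, inS (ψ t u v)) ∧
    -- on the chart {v ≠ 0}, the image lies in S° (x1 ≠ 0)
    (∀ t u v : k, v ≠ 0 → ψ t u v 1 ≠ 0) ∧
    -- surjectivity onto S°: every x ∈ S with x1 ≠ 0 is proportional to some ψ(t,u,v), v ≠ 0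
    (∀ x : Fin 5 → k, inS x → x 1 ≠ 0 →
      ∃ t u v : k, v ≠ 0 ∧ ∃ c : k, c ≠ 0 ∧ ψ t u v = c • x) ∧
    -- injectivity on the chart {v ≠ 0}
    (∀ t u v t' u' v' : k, v ≠ 0 → v' ≠ 0 →
      (∃ c : k, c ≠ 0 ∧ ψ t u v = c • ψ t' u' v') →
      ∃ d : k, d ≠ 0 ∧ (t, u, v) = (d * t', d * u', d * v')) ∧
    -- the inverse is x ↦ (x0 : x2 : x1)
    (∀ t u v : k, v ≠ 0 →
      ∃ c : k, c ≠ 0 ∧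
        (ψ t u v 0, ψ t u v 2, ψ t u v 1) = (c * t, c * u, c * v)) := by
  intro ψ inS
  refine ⟨isOnS_psi, fun t u v hv => pow_ne_zero 3 hv, ?_, ?_, ?_⟩
  · intro x hx hx1
    exact ⟨x 0, x 2, x 1, hx1, x 1 ^ 2, pow_ne_zero 2 hx1, psi_eq_smul_of_isOnS hx⟩
  · rintro t u v t' u' v' hv hv' ⟨c, hc, h⟩
    exact ⟨c * v' ^ 2 / v ^ 2, by simp [hc, hv, hv'], eq_smul_of_psi_eq_smul_psi hv h⟩
  · intro t u v hv
    exact ⟨v ^ 2, pow_ne_zero 2 hv, proj_psi t u v⟩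
end

section
/- The map (η3, α1, α2) ↦ (η3^2*α2 : η3^3 : η3^2*α1 : η3*α3 : α2*α3), where α3 = -(η3*α2 + α1^2), gives a bijection between the set {(η3, α1, α2) ∈ ℤ_{>0} × ℤ^2 | gcd(η3, α1, α2) = 1} and the set of rational points of S with x1 ≠ 0. -/
lemma keyprime (p : ℕ) (hp : p.Prime) (x0 x1 x2 x3 x4 : ℤ) (hx1 : x1 ≠ 0)
    (hnot : ¬ ((p:ℤ) ∣ x0 ∧ (p:ℤ) ∣ x1 ∧ (p:ℤ) ∣ x2 ∧ (p:ℤ) ∣ x3 ∧ (p:ℤ) ∣ x4))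
    (e1 : x0 * x3 = x1 * x4) (e2 : x0 * x1 + x1 * x3 + x2 ^ 2 = 0)
    (a : ℕ) (ha0 : (p:ℤ) ^ a ∣ x0) (ha1 : (p:ℤ) ^ a ∣ x1) (ha2 : (p:ℤ) ^ a ∣ x2) :
    3 * a ≤ 2 * (x1.natAbs.factorization p) := by
  have hdvd : ∀ (c : ℕ) (z : ℤ), ((p:ℤ)^c ∣ z) ↔ p^c ∣ z.natAbs := by
    intro c z
    rw [show ((p:ℤ)^c) = ((p^c : ℕ) : ℤ) by push_cast; ring, Int.natCast_dvd]
  have hv : ∀ (c : ℕ) (z : ℤ), z ≠ 0 → ((p:ℤ)^c ∣ z ↔ c ≤ z.natAbs.factorization p) := by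
    intro c z hz
    rw [hdvd, hp.pow_dvd_iff_le_factorization (Int.natAbs_ne_zero.mpr hz)]
  rcases Nat.eq_zero_or_pos a with rfl | hapos
  · simp
  have hpx0 : (p:ℤ) ∣ x0 := (dvd_pow_self (p:ℤ) hapos.ne').trans ha0
  have hpx1 : (p:ℤ) ∣ x1 := (dvd_pow_self (p:ℤ) hapos.ne').trans ha1
  have hpx2 : (p:ℤ) ∣ x2 := (dvd_pow_self (p:ℤ) hapos.ne').trans ha2
  by_cases h3 : (p:ℤ) ∣ x3
  · -- p ∣ x3, so p ∤ x4
    have h4 : ¬ (p:ℤ) ∣ x4 := fun h4 => hnot ⟨hpx0, hpx1, hpx2, h3, h4⟩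
    have hx4 : x4 ≠ 0 := by rintro rfl; exact h4 (dvd_zero _)
    have hx0 : x0 ≠ 0 := by
      rintro rfl
      apply hx4
      have : x1 * x4 = 0 := by linarith
      exact (mul_eq_zero.mp this).resolve_left hx1
    have hx3 : x3 ≠ 0 := by
      rintro rfl
      apply hx4
      have : x1 * x4 = 0 := by rw [← e1]; ring
      exact (mul_eq_zero.mp this).resolve_left hx1
    set b0 := x0.natAbs.factorization p with hb0def
    set b1 := x1.natAbs.factorization p with hb1def
    set b3 := x3.natAbs.factorization p with hb3def
    have h0' : x0.natAbs ≠ 0 := Int.natAbs_ne_zero.mpr hx0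
    have h1' : x1.natAbs ≠ 0 := Int.natAbs_ne_zero.mpr hx1
    have h3' : x3.natAbs ≠ 0 := Int.natAbs_ne_zero.mpr hx3
    have h4' : x4.natAbs ≠ 0 := Int.natAbs_ne_zero.mpr hx4
    have hb4 : x4.natAbs.factorization p = 0 :=
      Nat.factorization_eq_zero_of_not_dvd (fun h => h4 (Int.natCast_dvd.mpr h))
    have hmul : x0.natAbs * x3.natAbs = x1.natAbs * x4.natAbs := by
      rw [← Int.natAbs_mul, ← Int.natAbs_mul, e1]
    have hb : b0 + b3 = b1 := by
      have := congrArg (fun n => n.factorization p) hmul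
      simp only [Nat.factorization_mul h0' h3', Nat.factorization_mul h1' h4',
        Finsupp.add_apply, hb4] at this
      omega
    have hb3 : 1 ≤ b3 := (hv 1 x3 hx3).mp (by simpa using h3)
    have hab0 : a ≤ b0 := (hv a x0 hx0).mp ha0
    by_contra hcon
    push_neg at hcon
    -- hcon : 2 * b1 < 3 * a
    set c := b0 + 2*b3 + 1 with hcdef
    have hc1 : (p:ℤ)^c ∣ x0 * x1 := by
      rw [hv c _ (mul_ne_zero hx0 hx1)]
      rw [Int.natAbs_mul, Nat.factorization_mul h0' h1', Finsupp.add_apply]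
      omega
    have hc2 : (p:ℤ)^c ∣ x2 ^ 2 := by
      have h2a : ((p:ℤ)^a)^2 ∣ x2^2 := pow_dvd_pow_of_dvd ha2 2
      rw [← pow_mul] at h2a
      exact (pow_dvd_pow (p:ℤ) (by omega)).trans h2a
    have hc3 : (p:ℤ)^c ∣ x1 * x3 := by
      have : x1 * x3 = -(x0 * x1) - x2^2 := by linarith
      rw [this]
      exact dvd_sub (dvd_neg.mpr hc1) hc2
    rw [hv c _ (mul_ne_zero hx1 hx3), Int.natAbs_mul,
      Nat.factorization_mul h1' h3', Finsupp.add_apply] at hc3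
    omega
  · -- p ∤ x3
    have h2a : (p:ℤ)^(2*a) ∣ x1 * x3 := by
      have : x1 * x3 = -(x0 * x1) - x2^2 := by linarith
      rw [this]
      refine dvd_sub (dvd_neg.mpr ?_) ?_
      · rw [two_mul, pow_add]; exact mul_dvd_mul ha0 ha1
      · rw [two_mul, pow_add, sq]; exact mul_dvd_mul ha2 ha2
    have hnn : p^(2*a) ∣ x1.natAbs * x3.natAbs := by
      rw [← Int.natAbs_mul]; exact (hdvd _ _).mp h2a
    have hcop : Nat.Coprime (p^(2*a)) x3.natAbs :=
      Nat.Coprime.pow_left _ ((Nat.Prime.coprime_iff_not_dvd hp).mpr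
        (fun h => h3 (Int.natCast_dvd.mpr h)))
    have hd1 : p^(2*a) ∣ x1.natAbs := hcop.dvd_of_dvd_mul_right hnn
    have := (hp.pow_dvd_iff_le_factorization (Int.natAbs_ne_zero.mpr hx1)).mp hd1
    omega

lemma keyg (x : Fin 5 → ℤ) (hx1 : x 1 ≠ 0)
    (prim : Finset.univ.gcd (fun i => (x i).natAbs) = 1)
    (e1 : x 0 * x 3 - x 1 * x 4 = 0) (e2 : x 0 * x 1 + x 1 * x 3 + (x 2)^2 = 0)
    (kp : ∀ (p : ℕ), p.Prime →
      ¬ ((p:ℤ) ∣ x 0 ∧ (p:ℤ) ∣ x 1 ∧ (p:ℤ) ∣ x 2 ∧ (p:ℤ) ∣ x 3 ∧ (p:ℤ) ∣ x 4) →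
      ∀ (a : ℕ), (p:ℤ)^a ∣ x 0 → (p:ℤ)^a ∣ x 1 → (p:ℤ)^a ∣ x 2 →
      3 * a ≤ 2 * ((x 1).natAbs.factorization p)) :
    ((Int.gcd (Int.gcd (x 1) (x 2)) (x 0) : ℤ))^3 ∣ (x 1)^2 := by
  set g : ℕ := Int.gcd (Int.gcd (x 1) (x 2)) (x 0) with hgdef
  have hGd1 : (g:ℤ) ∣ x 1 := (Int.gcd_dvd_left _ _).trans (Int.gcd_dvd_left _ _)
  have hGd2 : (g:ℤ) ∣ x 2 := (Int.gcd_dvd_left _ _).trans (Int.gcd_dvd_right _ _)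
  have hGd0 : (g:ℤ) ∣ x 0 := Int.gcd_dvd_right _ _
  have hg0 : g ≠ 0 := by
    intro h
    rw [h] at hGd1
    exact hx1 (by simpa using hGd1)
  have hn1 : (x 1).natAbs ≠ 0 := Int.natAbs_ne_zero.mpr hx1
  have key : g^3 ∣ (x 1).natAbs^2 := by
    rw [← Nat.factorization_le_iff_dvd (pow_ne_zero _ hg0) (pow_ne_zero _ hn1)]
    rw [Finsupp.le_def]
    intro p
    rw [Nat.factorization_pow, Nat.factorization_pow]
    simp only [Finsupp.smul_apply, smul_eq_mul]
    by_cases hp : p.Prime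
    · have hnot : ¬ ((p:ℤ) ∣ x 0 ∧ (p:ℤ) ∣ x 1 ∧ (p:ℤ) ∣ x 2 ∧ (p:ℤ) ∣ x 3 ∧ (p:ℤ) ∣ x 4) := by
        rintro ⟨d0, d1, d2, d3, d4⟩
        have : p ∣ Finset.univ.gcd (fun i => (x i).natAbs) := by
          refine Finset.dvd_gcd ?_
          intro i _
          fin_cases i
          · exact Int.natCast_dvd.mp d0
          · exact Int.natCast_dvd.mp d1
          · exact Int.natCast_dvd.mp d2
          · exact Int.natCast_dvd.mp d3
          · exact Int.natCast_dvd.mp d4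
        rw [prim] at this
        exact hp.one_lt.ne' (Nat.dvd_one.mp this)
      set a := g.factorization p with hadef
      have hpa : (p:ℤ)^a ∣ (g:ℤ) := by
        have : p^a ∣ g := Nat.ordProj_dvd g p
        exact_mod_cast Int.natCast_dvd_natCast.mpr this
      exact kp p hp hnot a (hpa.trans hGd0) (hpa.trans hGd1) (hpa.trans hGd2)
    · rw [Nat.factorization_eq_zero_of_not_prime g hp]
      simp
  have : ((g^3 : ℕ) : ℤ) ∣ ((x 1)^2) := by
    rw [Int.natCast_dvd, Int.natAbs_pow]
    exact key
  exact_mod_cast this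



private lemma gcdmul (c a b e : ℤ) :
    Int.gcd (Int.gcd (c*a) (c*b)) (c*e) = c.natAbs * Int.gcd (Int.gcd a b) e := by
  simp [Int.gcd, Int.natAbs_mul, Int.natAbs_abs, Nat.gcd_mul_left]



/-- The map `(η3, α1, α2) ↦ (η3²α2 : η3³ : η3²α1 : η3·α3 : α2·α3)` with
`α3 = -(η3·α2 + α1²)` gives a bijection between
`{(η3,α1,α2) ∈ ℤ₊ × ℤ² | gcd(η3,α1,α2) = 1}` and the rational points of `S`
with `x1 ≠ 0` (represented by primitive integer vectors with `x1 > 0`;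
the projective point of the image is the primitive vector obtained after
dividing by the gcd of the coordinates). -/
theorem stmt_7 :
    let Φ : ℤ → ℤ → ℤ → (Fin 5 → ℤ) := fun η3 α1 α2 =>
      ![η3 ^ 2 * α2, η3 ^ 3, η3 ^ 2 * α1, η3 * (-(η3 * α2 + α1 ^ 2)),
        α2 * (-(η3 * α2 + α1 ^ 2))]
    let A : Set (ℤ × ℤ × ℤ) :=
      {p | 0 < p.1 ∧ Int.gcd (Int.gcd p.1 p.2.1) p.2.2 = 1}
    let P : Set (Fin 5 → ℤ) :=
      {x | Finset.univ.gcd (fun i => (x i).natAbs) = 1 ∧ 0 < x 1 ∧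
        x 0 * x 3 - x 1 * x 4 = 0 ∧ x 0 * x 1 + x 1 * x 3 + (x 2) ^ 2 = 0}
    let rel : (ℤ × ℤ × ℤ) → (Fin 5 → ℤ) → Prop := fun p x =>
      ∃ d : ℤ, 0 < d ∧ Φ p.1 p.2.1 p.2.2 = fun i => d * x i
    -- every triple corresponds to a unique rational point of S°
    (∀ p ∈ A, ∃ x ∈ P, rel p x) ∧
    -- injectivity
    (∀ p ∈ A, ∀ p' ∈ A, ∀ x ∈ P, rel p x → rel p' x → p = p') ∧
    -- surjectivity
    (∀ x ∈ P, ∃ p ∈ A, rel p x) := by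
  intro Φ A P rel
  refine ⟨?_, ?_, ?_⟩
  · -- existence
    rintro ⟨η, α1, α2⟩ ⟨hη, hgcd⟩
    set v : Fin 5 → ℤ := Φ η α1 α2 with hvdef
    have hv0 : v 0 = η^2*α2 := rfl
    have hv1 : v 1 = η^3 := rfl
    have hv2 : v 2 = η^2*α1 := rfl
    have hv3 : v 3 = η * (-(η*α2 + α1^2)) := rfl
    have hv4 : v 4 = α2 * (-(η*α2 + α1^2)) := rfl
    set D : ℕ := Finset.univ.gcd (fun i => (v i).natAbs) with hDdef
    have hDdvd : ∀ i, (D:ℤ) ∣ v i := fun i =>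
      Int.natCast_dvd.mpr (Finset.gcd_dvd (Finset.mem_univ i))
    have hD0 : D ≠ 0 := by
      intro h
      have h2 := hDdvd 1
      rw [h, hv1] at h2
      have h3 : η^3 = 0 := zero_dvd_iff.mp (by exact_mod_cast h2)
      nlinarith
    set x : Fin 5 → ℤ := fun i => v i / (D:ℤ) with hxdef
    have hvx : ∀ i, v i = (D:ℤ) * x i := fun i => (Int.mul_ediv_cancel' (hDdvd i)).symm
    have hDpos : (0:ℤ) < (D:ℤ) := by exact_mod_cast Nat.pos_of_ne_zero hD0
    have hx1pos : 0 < x 1 := by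
      have hEq : (D:ℤ) * x 1 = η^3 := (hvx 1).symm.trans hv1
      by_contra hc
      push_neg at hc
      nlinarith [pow_pos hη 3]
    refine ⟨x, ⟨?_, hx1pos, ?_, ?_⟩, (D:ℤ), hDpos, funext hvx⟩
    · -- primitivity
      have hnat : ∀ i, (v i).natAbs = D * (x i).natAbs := by
        intro i; rw [hvx i, Int.natAbs_mul, Int.natAbs_natCast]
      have hDt : D * Finset.univ.gcd (fun i => (x i).natAbs) ∣ D := by
        refine Finset.dvd_gcd ?_
        intro i _
        rw [hnat i]
        exact mul_dvd_mul_left D (Finset.gcd_dvd (Finset.mem_univ i))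
      have h1 : D * Finset.univ.gcd (fun i => (x i).natAbs) ∣ D * 1 := by simpa using hDt
      exact Nat.dvd_one.mp ((Nat.mul_dvd_mul_iff_left (Nat.pos_of_ne_zero hD0)).mp h1)
    · -- eq1
      have hz : v 0 * v 3 - v 1 * v 4 = 0 := by rw [hv0, hv1, hv3, hv4]; ring
      rw [hvx 0, hvx 1, hvx 3, hvx 4] at hz
      refine mul_left_cancel₀ (pow_ne_zero 2 hDpos.ne') ?_
      rw [mul_zero]
      linear_combination hz
    · -- eq2
      have hz : v 0 * v 1 + v 1 * v 3 + (v 2)^2 = 0 := by rw [hv0, hv1, hv2, hv3]; ring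
      rw [hvx 0, hvx 1, hvx 2, hvx 3] at hz
      refine mul_left_cancel₀ (pow_ne_zero 2 hDpos.ne') ?_
      rw [mul_zero]
      linear_combination hz
  · -- injectivity
    rintro ⟨η, α1, α2⟩ ⟨hη, hgcd⟩ ⟨η', α1', α2'⟩ ⟨hη', hgcd'⟩ x
      ⟨hprim, hx1, hee1, hee2⟩ ⟨d, hd, heq⟩ ⟨d', hd', heq'⟩
    have h1 : η^3 = d * x 1 := congrFun heq 1
    have h2 : η^2*α1 = d * x 2 := congrFun heq 2
    have h0 : η^2*α2 = d * x 0 := congrFun heq 0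
    have h1' : η'^3 = d' * x 1 := congrFun heq' 1
    have h2' : η'^2*α1' = d' * x 2 := congrFun heq' 2
    have h0' : η'^2*α2' = d' * x 0 := congrFun heq' 0
    have k1 : (d'*η^2) * η = (d*η'^2) * η' := by linear_combination d' * h1 - d * h1'
    have k2 : (d'*η^2) * α1 = (d*η'^2) * α1' := by linear_combination d' * h2 - d * h2'
    have k0 : (d'*η^2) * α2 = (d*η'^2) * α2' := by linear_combination d' * h0 - d * h0'
    have hcpos : (0:ℤ) < d'*η^2 := mul_pos hd' (pow_pos hη 2)
    have hc'pos : (0:ℤ) < d*η'^2 := mul_pos hd (pow_pos hη' 2)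
    have g1 := gcdmul (d'*η^2) η α1 α2
    have g2 := gcdmul (d*η'^2) η' α1' α2'
    rw [hgcd, mul_one] at g1
    rw [hgcd', mul_one] at g2
    rw [k1, k2, k0] at g1
    have hcc : (d'*η^2).natAbs = (d*η'^2).natAbs := g1.symm.trans g2
    have hceq : d'*η^2 = d*η'^2 := by
      rw [← Int.natAbs_of_nonneg hcpos.le, ← Int.natAbs_of_nonneg hc'pos.le, hcc]
    rw [← hceq] at k1 k2 k0
    have e1 : η = η' := mul_left_cancel₀ hcpos.ne' k1
    have e2 : α1 = α1' := mul_left_cancel₀ hcpos.ne' k2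
    have e3 : α2 = α2' := mul_left_cancel₀ hcpos.ne' k0
    simp [e1, e2, e3]
  · -- surjectivity
    rintro x ⟨hprim, hx1pos, he1, he2⟩
    have hx1 : x 1 ≠ 0 := hx1pos.ne'
    set g : ℕ := Int.gcd (Int.gcd (x 1) (x 2)) (x 0) with hgdef
    have hGd1 : (g:ℤ) ∣ x 1 := (Int.gcd_dvd_left _ _).trans (Int.gcd_dvd_left _ _)
    have hGd2 : (g:ℤ) ∣ x 2 := (Int.gcd_dvd_left _ _).trans (Int.gcd_dvd_right _ _)
    have hGd0 : (g:ℤ) ∣ x 0 := Int.gcd_dvd_right _ _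
    have hg0 : g ≠ 0 := by
      intro h
      rw [h] at hGd1
      exact hx1 (by simpa using hGd1)
    have hGpos : (0:ℤ) < (g:ℤ) := by exact_mod_cast Nat.pos_of_ne_zero hg0
    obtain ⟨η, hηeq⟩ := hGd1
    obtain ⟨α1, hα1eq⟩ := hGd2
    obtain ⟨α2, hα2eq⟩ := hGd0
    have hcube : ((g:ℤ))^3 ∣ (x 1)^2 :=
      keyg x hx1 hprim he1 he2 (fun p hp hnot a ha0 ha1 ha2 =>
        keyprime p hp (x 0) (x 1) (x 2) (x 3) (x 4) hx1 hnot (by linarith) he2 a ha0 ha1 ha2)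
    obtain ⟨d, hdeq⟩ := hcube
    have hdpos : 0 < d := by nlinarith [pow_pos hx1pos 2, pow_pos hGpos 3]
    have hηpos : 0 < η := by nlinarith
    have hgone : Int.gcd (Int.gcd η α1) α2 = 1 := by
      have hgm := gcdmul (g:ℤ) η α1 α2
      rw [← hηeq, ← hα1eq, ← hα2eq, Int.natAbs_natCast, ← hgdef] at hgm
      exact (Nat.mul_eq_left hg0).mp hgm.symm
    refine ⟨(η, α1, α2), ⟨hηpos, hgone⟩, d, hdpos, ?_⟩
    simp only [hηeq, hα1eq, hα2eq] at hdeq he1 he2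
    funext i
    fin_cases i
    · show η^2*α2 = d * x 0
      refine mul_left_cancel₀ (pow_ne_zero 3 hGpos.ne') ?_
      linear_combination ((g:ℤ)*α2)*hdeq - (g:ℤ)^3*d*hα2eq
    · show η^3 = d * x 1
      refine mul_left_cancel₀ (pow_ne_zero 3 hGpos.ne') ?_
      linear_combination ((g:ℤ)*η)*hdeq - (g:ℤ)^3*d*hηeq
    · show η^2*α1 = d * x 2
      refine mul_left_cancel₀ (pow_ne_zero 3 hGpos.ne') ?_
      linear_combination ((g:ℤ)*α1)*hdeq - (g:ℤ)^3*d*hα1eq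
    · show η * (-(η*α2 + α1^2)) = d * x 3
      refine mul_left_cancel₀ (pow_ne_zero 3 hGpos.ne') ?_
      linear_combination (x 3)*hdeq - ((g:ℤ)*η)*he2
    · show α2 * (-(η*α2 + α1^2)) = d * x 4
      refine mul_left_cancel₀ (pow_ne_zero 3 hGpos.ne') ?_
      linear_combination (x 4)*hdeq + ((g:ℤ)*η)*he1 - ((g:ℤ)*α2)*he2
end

section
/- The archimedean integral ω_∞ = 3 * ∫∫∫_{{(t,u,v) ∈ ℝ^3 : 0 ≤ v ≤ 1, |t*v^2| ≤ 1, |v^2*u| ≤ 1, |v*(t*v+u^2)| ≤ 1, |t*(t*v+u^2)| ≤ 1}} 1 dt du dv is finite. -/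
open MeasureTheory Set
open scoped ENNReal

namespace Stmt16Aux

/-- bound on the `v`-slice measure -/
noncomputable def m (t : ℝ) : ℝ≥0∞ := min 1 (ENNReal.ofReal (2 / t ^ 2))

/-- radius of the `u`-interval -/
noncomputable def r (t : ℝ) : ℝ := Real.sqrt (|t| + 1 / |t|)

/-- bound on the `(u,v)`-slice measure -/
noncomputable def B (t : ℝ) : ℝ≥0∞ := m t * ENNReal.ofReal (2 * r t)

lemma r_nonneg (t : ℝ) : 0 ≤ r t := Real.sqrt_nonneg _

lemma volV_le (t u : ℝ) (ht : t ≠ 0) :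
    volume {v : ℝ | (0 ≤ v ∧ v ≤ 1) ∧ |t * (t * v + u ^ 2)| ≤ 1} ≤
      (Icc (-(r t)) (r t)).indicator (fun _ => m t) u := by
  have htpos : 0 < |t| := abs_pos.mpr ht
  have ht2 : (0:ℝ) < t ^ 2 := by positivity
  by_cases hu : u ∈ Icc (-(r t)) (r t)
  · rw [indicator_of_mem hu]
    refine le_min ?_ ?_
    · calc volume {v : ℝ | (0 ≤ v ∧ v ≤ 1) ∧ |t * (t * v + u ^ 2)| ≤ 1}
          ≤ volume (Icc (0:ℝ) 1) := measure_mono fun v hv => ⟨hv.1.1, hv.1.2⟩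
        _ = 1 := by simp [Real.volume_Icc]
    · calc volume {v : ℝ | (0 ≤ v ∧ v ≤ 1) ∧ |t * (t * v + u ^ 2)| ≤ 1}
          ≤ volume (Icc (-(u ^ 2) / t - 1 / t ^ 2) (-(u ^ 2) / t + 1 / t ^ 2)) := by
            refine measure_mono fun v hv => ?_
            have key : |v - -(u ^ 2) / t| ≤ 1 / t ^ 2 := by
              have h1 : v - -(u ^ 2) / t = t * (t * v + u ^ 2) / t ^ 2 := by
                field_simp; ring
              rw [h1, abs_div, abs_of_pos ht2, div_le_div_iff₀ ht2 ht2]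
              calc |t * (t * v + u ^ 2)| * t ^ 2 ≤ 1 * t ^ 2 := by
                    exact mul_le_mul_of_nonneg_right hv.2 ht2.le
                _ = 1 * t ^ 2 := rfl
            rw [abs_le] at key
            exact ⟨by linarith [key.1], by linarith [key.2]⟩
        _ = ENNReal.ofReal (2 / t ^ 2) := by
            rw [Real.volume_Icc]; congr 1; ring
  · rw [indicator_of_notMem hu]
    have hu2 : |t| + 1 / |t| < u ^ 2 := by
      have hru : r t < |u| := by
        by_contra hle
        push_neg at hle
        exact hu (mem_Icc.mpr (abs_le.mp hle))
      have hsq : r t ^ 2 = |t| + 1 / |t| :=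
        Real.sq_sqrt (by positivity : (0:ℝ) ≤ |t| + 1 / |t|)
      have h2 : r t ^ 2 < |u| ^ 2 := by nlinarith [r_nonneg t, abs_nonneg u]
      rw [sq_abs] at h2
      linarith
    have hempty : {v : ℝ | (0 ≤ v ∧ v ≤ 1) ∧ |t * (t * v + u ^ 2)| ≤ 1} = ∅ := by
      rw [eq_empty_iff_forall_notMem]
      rintro v ⟨⟨hv0, hv1⟩, habs⟩
      rw [abs_mul] at habs
      have h2 : t * v + u ^ 2 ≤ |t * v + u ^ 2| := le_abs_self _
      have h3 : -(t * v) ≤ |t| * v := by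
        have : |t * v| = |t| * v := by rw [abs_mul, abs_of_nonneg hv0]
        linarith [neg_abs_le (t * v), this.ge]
      have h4 : |t| * (1 / |t|) = 1 := by field_simp
      nlinarith [abs_nonneg (t * v + u ^ 2), mul_le_mul_of_nonneg_left hv1 htpos.le]
    rw [hempty]; simp

lemma lint_u (t : ℝ) (ht : t ≠ 0) :
    ∫⁻ u : ℝ, volume {v : ℝ | (0 ≤ v ∧ v ≤ 1) ∧ |t * (t * v + u ^ 2)| ≤ 1} ≤ B t := by
  calc ∫⁻ u : ℝ, volume {v : ℝ | (0 ≤ v ∧ v ≤ 1) ∧ |t * (t * v + u ^ 2)| ≤ 1}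
      ≤ ∫⁻ u : ℝ, (Icc (-(r t)) (r t)).indicator (fun _ => m t) u :=
        lintegral_mono fun u => volV_le t u ht
    _ = m t * volume (Icc (-(r t)) (r t)) := by
        rw [lintegral_indicator measurableSet_Icc, setLIntegral_const]
    _ = B t := by
        rw [Real.volume_Icc, B]; congr 1; rw [show r t - -(r t) = 2 * r t by ring]

lemma lint_ofReal_lt_top {f : ℝ → ℝ} {s : Set ℝ} (hs : MeasurableSet s)
    (hf : IntegrableOn f s volume)
    (h0 : ∀ x ∈ s, 0 ≤ f x) : ∫⁻ t in s, ENNReal.ofReal (f t) < ⊤ :=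
  (hasFiniteIntegral_iff_ofReal
    ((ae_restrict_iff' hs).2 (ae_of_all _ h0))).1 hf.2

lemma B_neg (t : ℝ) : B (-t) = B t := by
  simp [B, m, r, neg_sq, abs_neg]

lemma B_lt_top : ∫⁻ t : ℝ, B t < ⊤ := by
  have hsplit : ∫⁻ t : ℝ, B t = (∫⁻ t in Iio (0:ℝ), B t) + ∫⁻ t in Ici (0:ℝ), B t := by
    have h := lintegral_add_compl B (measurableSet_Iio (a := (0:ℝ))) (μ := volume)
    rw [compl_Iio] at h
    exact h.symm
  have hneg : ∫⁻ t in Iio (0:ℝ), B t = ∫⁻ t in Ioi (0:ℝ), B t := by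
    have hmp : MeasurePreserving (fun t : ℝ => -t) volume volume :=
      Measure.measurePreserving_neg _
    have hemb : MeasurableEmbedding (fun t : ℝ => -t) :=
      (Homeomorph.neg ℝ).measurableEmbedding
    have hpre : (fun t : ℝ => -t) ⁻¹' (Ioi 0) = Iio 0 := by ext x; simp
    calc ∫⁻ t in Iio (0:ℝ), B t = ∫⁻ t in (fun t : ℝ => -t) ⁻¹' (Ioi 0), B (-t) := by
          rw [hpre]; exact lintegral_congr fun t => (B_neg t).symm
      _ = ∫⁻ t in Ioi (0:ℝ), B t := hmp.setLIntegral_comp_preimage_emb hemb B (Ioi 0)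
  have hIci : ∫⁻ t in Ici (0:ℝ), B t = ∫⁻ t in Ioi (0:ℝ), B t :=
    setLIntegral_congr (Ioi_ae_eq_Ici (μ := volume) (a := (0:ℝ))).symm
  have hIoi : ∫⁻ t in Ioi (0:ℝ), B t < ⊤ := by
    have hunion : Ioc (0:ℝ) 1 ∪ Ioi 1 = Ioi 0 := Ioc_union_Ioi_eq_Ioi zero_le_one
    have h1 : ∫⁻ t in Ioc (0:ℝ) 1, B t < ⊤ := by
      have hb : ∀ t ∈ Ioc (0:ℝ) 1, B t ≤
          ENNReal.ofReal (2 * Real.sqrt 2 * t ^ (-(1/2) : ℝ)) := by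
        intro t ht
        have ht0 : 0 < t := ht.1
        have habs : |t| = t := abs_of_pos ht0
        have hr : r t ≤ Real.sqrt 2 * t ^ (-(1/2) : ℝ) := by
          have h11 : t ≤ 1 / t := by
            rw [le_div_iff₀ ht0]; nlinarith [ht.2]
          have h12 : r t ≤ Real.sqrt (2 * (1 / t)) := by
            rw [r, habs]
            exact Real.sqrt_le_sqrt (by linarith)
          rw [Real.sqrt_mul (by norm_num : (0:ℝ) ≤ 2)] at h12
          have h13 : Real.sqrt (1 / t) = t ^ (-(1/2) : ℝ) := by
            rw [Real.rpow_neg ht0.le, ← Real.sqrt_eq_rpow, one_div, Real.sqrt_inv]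
          rwa [h13] at h12
        calc B t ≤ 1 * ENNReal.ofReal (2 * r t) :=
              mul_le_mul_left (min_le_left _ _) _
          _ = ENNReal.ofReal (2 * r t) := one_mul _
          _ ≤ ENNReal.ofReal (2 * Real.sqrt 2 * t ^ (-(1/2) : ℝ)) := by
              apply ENNReal.ofReal_le_ofReal; nlinarith [r_nonneg t]
      calc ∫⁻ t in Ioc (0:ℝ) 1, B t
          ≤ ∫⁻ t in Ioc (0:ℝ) 1, ENNReal.ofReal (2 * Real.sqrt 2 * t ^ (-(1/2) : ℝ)) := by
            refine lintegral_mono_ae ((ae_restrict_iff' measurableSet_Ioc).2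
              (ae_of_all _ hb))
        _ < ⊤ := by
            refine lint_ofReal_lt_top measurableSet_Ioc ?_ ?_
            · exact ((intervalIntegral.intervalIntegrable_rpow'
                (by norm_num : (-1:ℝ) < -(1/2))).1).const_mul _
            · intro x hx
              have hx0 : (0:ℝ) < x := hx.1
              positivity
    have h2 : ∫⁻ t in Ioi (1:ℝ), B t < ⊤ := by
      have hb : ∀ t ∈ Ioi (1:ℝ), B t ≤
          ENNReal.ofReal (4 * Real.sqrt 2 * t ^ (-(3/2) : ℝ)) := by
        intro t ht
        have ht1 : (1:ℝ) < t := ht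
        have ht0 : 0 < t := by linarith
        have habs : |t| = t := abs_of_pos ht0
        have hr : r t ≤ Real.sqrt 2 * Real.sqrt t := by
          have h11 : 1 / t ≤ t := by
            rw [div_le_iff₀ ht0]; nlinarith
          have h12 : r t ≤ Real.sqrt (2 * t) := by
            rw [r, habs]
            exact Real.sqrt_le_sqrt (by linarith)
          rwa [Real.sqrt_mul (by norm_num : (0:ℝ) ≤ 2)] at h12
        have hkey : t ^ (-(3/2) : ℝ) = Real.sqrt t / t ^ 2 := by
          rw [show (-(3/2) : ℝ) = 1/2 - 2 by norm_num, Real.rpow_sub ht0,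
            ← Real.sqrt_eq_rpow, show ((2:ℝ) : ℝ) = ((2:ℕ) : ℝ) by norm_num,
            Real.rpow_natCast]
        calc B t ≤ ENNReal.ofReal (2 / t ^ 2) * ENNReal.ofReal (2 * r t) :=
              mul_le_mul_left (min_le_right _ _) _
          _ = ENNReal.ofReal (2 / t ^ 2 * (2 * r t)) :=
              (ENNReal.ofReal_mul (by positivity)).symm
          _ ≤ ENNReal.ofReal (4 * Real.sqrt 2 * t ^ (-(3/2) : ℝ)) := by
              apply ENNReal.ofReal_le_ofReal
              rw [hkey]
              have hstep : 2 / t ^ 2 * (2 * r t) ≤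
                  2 / t ^ 2 * (2 * (Real.sqrt 2 * Real.sqrt t)) := by
                apply mul_le_mul_of_nonneg_left (by linarith) (by positivity)
              have heq : 2 / t ^ 2 * (2 * (Real.sqrt 2 * Real.sqrt t)) =
                  4 * Real.sqrt 2 * (Real.sqrt t / t ^ 2) := by ring
              linarith
      calc ∫⁻ t in Ioi (1:ℝ), B t
          ≤ ∫⁻ t in Ioi (1:ℝ), ENNReal.ofReal (4 * Real.sqrt 2 * t ^ (-(3/2) : ℝ)) := by
            refine lintegral_mono_ae ((ae_restrict_iff' measurableSet_Ioi).2
              (ae_of_all _ hb))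
        _ < ⊤ := by
            refine lint_ofReal_lt_top measurableSet_Ioi ?_ ?_
            · exact (integrableOn_Ioi_rpow_of_lt
                (by norm_num : (-(3/2):ℝ) < -1) one_pos).const_mul _
            · intro x hx
              have hx0 : (0:ℝ) < x := lt_trans one_pos hx
              positivity
    calc ∫⁻ t in Ioi (0:ℝ), B t
        = ∫⁻ t in Ioc (0:ℝ) 1 ∪ Ioi 1, B t := by rw [hunion]
      _ ≤ (∫⁻ t in Ioc (0:ℝ) 1, B t) + ∫⁻ t in Ioi (1:ℝ), B t := lintegral_union_le _ _ _
      _ < ⊤ := ENNReal.add_lt_top.mpr ⟨h1, h2⟩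
  rw [hsplit, hneg, hIci]
  exact ENNReal.add_lt_top.mpr ⟨hIoi, hIoi⟩

end Stmt16Aux

open Stmt16Aux in
/-- The archimedean density `ω_∞ = 3 · vol(D)` is finite, where
`D = {(t,u,v) ∈ ℝ³ : 0 ≤ v ≤ 1, |tv²| ≤ 1, |v²u| ≤ 1, |v(tv+u²)| ≤ 1,
|t(tv+u²)| ≤ 1}`. -/
theorem stmt_16 :
    3 * volume {p : ℝ × ℝ × ℝ |
      0 ≤ p.2.2 ∧ p.2.2 ≤ 1 ∧
      |p.1 * p.2.2 ^ 2| ≤ 1 ∧ |p.2.2 ^ 2 * p.2.1| ≤ 1 ∧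
      |p.2.2 * (p.1 * p.2.2 + p.2.1 ^ 2)| ≤ 1 ∧
      |p.1 * (p.1 * p.2.2 + p.2.1 ^ 2)| ≤ 1} < ⊤ := by
  have key : volume {p : ℝ × ℝ × ℝ |
      0 ≤ p.2.2 ∧ p.2.2 ≤ 1 ∧
      |p.1 * p.2.2 ^ 2| ≤ 1 ∧ |p.2.2 ^ 2 * p.2.1| ≤ 1 ∧
      |p.2.2 * (p.1 * p.2.2 + p.2.1 ^ 2)| ≤ 1 ∧
      |p.1 * (p.1 * p.2.2 + p.2.1 ^ 2)| ≤ 1} < ⊤ := by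
    set S' : Set (ℝ × ℝ × ℝ) :=
      {p : ℝ × ℝ × ℝ | (0 ≤ p.2.2 ∧ p.2.2 ≤ 1) ∧
        |p.1 * (p.1 * p.2.2 + p.2.1 ^ 2)| ≤ 1} with hS'
    have hsub : {p : ℝ × ℝ × ℝ |
        0 ≤ p.2.2 ∧ p.2.2 ≤ 1 ∧
        |p.1 * p.2.2 ^ 2| ≤ 1 ∧ |p.2.2 ^ 2 * p.2.1| ≤ 1 ∧
        |p.2.2 * (p.1 * p.2.2 + p.2.1 ^ 2)| ≤ 1 ∧
        |p.1 * (p.1 * p.2.2 + p.2.1 ^ 2)| ≤ 1} ⊆ S' := by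
      rintro p ⟨h1, h2, _, _, _, h6⟩
      exact ⟨⟨h1, h2⟩, h6⟩
    have hmeas : MeasurableSet S' := by
      have hc : IsClosed S' := by
        rw [hS']
        simp only [setOf_and]
        refine IsClosed.inter (IsClosed.inter ?_ ?_) ?_
        · exact isClosed_le continuous_const (by fun_prop)
        · exact isClosed_le (by fun_prop) continuous_const
        · refine isClosed_le (Continuous.abs (by fun_prop)) continuous_const
      exact hc.measurableSet
    have htonelli : volume S' = ∫⁻ t : ℝ, ∫⁻ u : ℝ,
        volume {v : ℝ | (0 ≤ v ∧ v ≤ 1) ∧ |t * (t * v + u ^ 2)| ≤ 1} := by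
      rw [Measure.volume_eq_prod, Measure.prod_apply hmeas]
      refine lintegral_congr fun t => ?_
      rw [Measure.volume_eq_prod, Measure.prod_apply (measurable_prodMk_left hmeas)]
      refine lintegral_congr fun u => ?_
      congr 1
    have hae : ∀ᵐ t : ℝ, (∫⁻ u : ℝ,
        volume {v : ℝ | (0 ≤ v ∧ v ≤ 1) ∧ |t * (t * v + u ^ 2)| ≤ 1}) ≤ B t := by
      rw [ae_iff]
      refine measure_mono_null ?_ (Real.volume_singleton (a := (0:ℝ)))
      intro t ht
      simp only [mem_setOf_eq, not_le] at ht
      simp only [mem_singleton_iff]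
      by_contra h0
      exact absurd (lint_u t h0) (not_le.mpr ht)
    calc volume {p : ℝ × ℝ × ℝ |
          0 ≤ p.2.2 ∧ p.2.2 ≤ 1 ∧
          |p.1 * p.2.2 ^ 2| ≤ 1 ∧ |p.2.2 ^ 2 * p.2.1| ≤ 1 ∧
          |p.2.2 * (p.1 * p.2.2 + p.2.1 ^ 2)| ≤ 1 ∧
          |p.1 * (p.1 * p.2.2 + p.2.1 ^ 2)| ≤ 1}
        ≤ volume S' := measure_mono hsub
      _ = ∫⁻ t : ℝ, ∫⁻ u : ℝ,
          volume {v : ℝ | (0 ≤ v ∧ v ≤ 1) ∧ |t * (t * v + u ^ 2)| ≤ 1} := htonelli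
      _ ≤ ∫⁻ t : ℝ, B t := lintegral_mono_ae hae
      _ < ⊤ := B_lt_top
  exact ENNReal.mul_lt_top (by norm_num) key
end
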